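/- Let K be a finite ring, G a finite simple left K-module, χ a nontrivial character of G, and X a random variable with values in G^ℓ. Define Y_k = ∑_{i=1}^ℓ k_i X_i for k ∈ K^ℓ. Then for every x ∈ G^ℓ, P[X = x] = (1/|K|^ℓ) ∑_{k∈K^ℓ, y∈G} χ(∑_i k_i x_i − y) · P[Y_k = y]. In other words, the joint distribution of X is determined by the distributions of all K-linear combinations of its coordinates. -/
import Mathlib

open Finset

lemma addChar_map_sum {G ι : Type*} [AddCommGroup G] (χ : AddChar G ℂ)
    (s : Finset ι) (f : ι → G) : χ (∑ i ∈ s, f i) = ∏ i ∈ s, χ (f i) := by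
  induction s using Finset.cons_induction with
  | empty => simp
  | cons a s ha ih => simp [Finset.sum_cons, Finset.prod_cons, AddChar.map_add_eq_mul, ih]

lemma char_sum_smul_eq_zero {K G : Type*} [Ring K] [Fintype K]
    [AddCommGroup G] [Module K G] [IsSimpleModule K G]
    (χ : AddChar G ℂ) (hχ : χ ≠ 1) {g : G} (hg : g ≠ 0) :
    ∑ k : K, χ (k • g) = 0 := by
  set f : K →+ G := (smulAddHom K G).flip g with hf
  have hfapp : ∀ k : K, f k = k • g := fun k => rfl
  have hsurj : Function.Surjective f := by
    intro a
    have hsp : Submodule.span K {g} = ⊤ := by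
      rcases eq_bot_or_eq_top (Submodule.span K {g}) with h | h
      · exact absurd ((Submodule.span_singleton_eq_bot).mp h) hg
      · exact h
    have ha : a ∈ Submodule.span K {g} := hsp ▸ Submodule.mem_top
    obtain ⟨c, hc⟩ := Submodule.mem_span_singleton.mp ha
    exact ⟨c, hc⟩
  set ψ : AddChar K ℂ := χ.compAddMonoidHom f with hψ
  have hψne : ψ ≠ 1 := by
    obtain ⟨a, ha⟩ := AddChar.ne_one_iff.mp hχ
    obtain ⟨k, hk⟩ := hsurj a
    intro h
    apply ha
    have := congrArg (fun φ : AddChar K ℂ => φ k) h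
    simpa [hψ, hk] using this
  have := AddChar.sum_eq_zero_of_ne_one hψne
  simpa [hψ, hfapp] using this

lemma char_sum_smul {K G : Type*} [Ring K] [Fintype K]
    [AddCommGroup G] [Module K G] [IsSimpleModule K G] [DecidableEq G]
    (χ : AddChar G ℂ) (hχ : χ ≠ 1) (g : G) :
    ∑ k : K, χ (k • g) = if g = 0 then (Fintype.card K : ℂ) else 0 := by
  by_cases h : g = 0
  · simp [h]
  · simp [h, char_sum_smul_eq_zero χ hχ h]

theorem joint_dist_from_linear_combinations (K G : Type*) [Ring K] [Fintype K]
    [AddCommGroup G] [Module K G] [Fintype G] [DecidableEq G] [IsSimpleModule K G]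
    (χ : AddChar G ℂ) (hχ : χ ≠ 1) (ℓ : ℕ) (p : (Fin ℓ → G) → ℝ)
    (hp0 : ∀ x, 0 ≤ p x) (hp1 : ∑ x : Fin ℓ → G, p x = 1) (x : Fin ℓ → G) :
    (p x : ℂ) =
      (1 / (Fintype.card K : ℂ) ^ ℓ) *
        ∑ k : Fin ℓ → K, ∑ y : G,
          χ ((∑ i : Fin ℓ, k i • x i) - y) *
            ∑ z ∈ univ.filter (fun z : Fin ℓ → G => (∑ i : Fin ℓ, k i • z i) = y),
              (p z : ℂ) := by
  have hK : (Fintype.card K : ℂ) ≠ 0 := by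
    exact_mod_cast Nat.cast_ne_zero.mpr Fintype.card_ne_zero
  have key : (∑ k : Fin ℓ → K, ∑ y : G,
      χ ((∑ i : Fin ℓ, k i • x i) - y) *
        ∑ z ∈ univ.filter (fun z : Fin ℓ → G => (∑ i : Fin ℓ, k i • z i) = y),
          (p z : ℂ)) = (Fintype.card K : ℂ) ^ ℓ * (p x : ℂ) := by
    have step1 : ∀ k : Fin ℓ → K,
        (∑ y : G, χ ((∑ i : Fin ℓ, k i • x i) - y) *
          ∑ z ∈ univ.filter (fun z : Fin ℓ → G => (∑ i : Fin ℓ, k i • z i) = y),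
            (p z : ℂ)) =
        ∑ z : Fin ℓ → G, χ ((∑ i : Fin ℓ, k i • x i) - ∑ i : Fin ℓ, k i • z i) * (p z : ℂ) := by
      intro k
      rw [← Finset.sum_fiberwise (univ : Finset (Fin ℓ → G))
        (fun z => ∑ i : Fin ℓ, k i • z i)
        (fun z => χ ((∑ i : Fin ℓ, k i • x i) - ∑ i : Fin ℓ, k i • z i) * (p z : ℂ))]
      refine Finset.sum_congr rfl fun y _ => ?_
      rw [Finset.mul_sum]
      refine Finset.sum_congr rfl fun z hz => ?_
      rw [(Finset.mem_filter.mp hz).2]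
    calc (∑ k : Fin ℓ → K, ∑ y : G,
        χ ((∑ i : Fin ℓ, k i • x i) - y) *
          ∑ z ∈ univ.filter (fun z : Fin ℓ → G => (∑ i : Fin ℓ, k i • z i) = y),
            (p z : ℂ))
        = ∑ k : Fin ℓ → K, ∑ z : Fin ℓ → G,
            χ ((∑ i : Fin ℓ, k i • x i) - ∑ i : Fin ℓ, k i • z i) * (p z : ℂ) := by
          exact Finset.sum_congr rfl fun k _ => step1 k
      _ = ∑ z : Fin ℓ → G, (∑ k : Fin ℓ → K,
            χ (∑ i : Fin ℓ, k i • (x i - z i))) * (p z : ℂ) := by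
          rw [Finset.sum_comm]
          refine Finset.sum_congr rfl fun z _ => ?_
          rw [Finset.sum_mul]
          refine Finset.sum_congr rfl fun k _ => ?_
          congr 2
          simp [smul_sub, Finset.sum_sub_distrib]
      _ = ∑ z : Fin ℓ → G,
            (if (∀ i, x i - z i = 0) then (Fintype.card K : ℂ) ^ ℓ else 0) * (p z : ℂ) := by
          refine Finset.sum_congr rfl fun z _ => ?_
          congr 1
          have : (∑ k : Fin ℓ → K, χ (∑ i : Fin ℓ, k i • (x i - z i)))
              = ∑ k : Fin ℓ → K, ∏ i : Fin ℓ, χ (k i • (x i - z i)) := by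
            refine Finset.sum_congr rfl fun k _ => ?_
            rw [addChar_map_sum]
          rw [this, ← Fintype.piFinset_univ,
            ← Finset.prod_univ_sum (fun _ : Fin ℓ => (univ : Finset K))
              (fun i c => χ (c • (x i - z i)))]
          have : ∀ i : Fin ℓ, (∑ c : K, χ (c • (x i - z i)))
              = if x i - z i = 0 then (Fintype.card K : ℂ) else 0 :=
            fun i => char_sum_smul χ hχ _
          simp_rw [this]
          by_cases h : ∀ i, x i - z i = 0
          · simp [h]
          · push_neg at h
            obtain ⟨i, hi⟩ := h
            rw [if_neg (by push_neg; exact ⟨i, hi⟩)]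
            exact Finset.prod_eq_zero (Finset.mem_univ i) (by simp [hi])
      _ = ∑ z : Fin ℓ → G,
            (if z = x then (Fintype.card K : ℂ) ^ ℓ else 0) * (p z : ℂ) := by
          refine Finset.sum_congr rfl fun z _ => ?_
          congr 1
          simp [sub_eq_zero, funext_iff, eq_comm]
      _ = (Fintype.card K : ℂ) ^ ℓ * (p x : ℂ) := by
          simp [ite_mul, Finset.sum_ite_eq']
  rw [key]
  field_simp
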